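/- Let h ∈ ℝ^n, let T₀ ⊆ {1,…,n}, let k be a positive integer, and let T₁, T₂, …, T_M be a partition of T₀ᶜ such that |T_j| = k for all j < M, |T_M| ≤ k, and for every j ≥ 2, every u ∈ T_j and every v ∈ T_{j−1} satisfy |h_u| ≤ |h_v|. Then Σ_{j=2}^M ‖h_{T_j}‖₂ ≤ k^{−1/2}‖h_{T₀ᶜ}‖₁. -/

import Mathlib

open Finset

/-- The restriction of a vector to a set of indices: agrees with `x` on `S`, zero elsewhere. -/
noncomputable def restr {n : ℕ} (x : Fin n → ℝ) (S : Finset (Fin n)) : Fin n → ℝ :=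
  fun i => if i ∈ S then x i else 0

/-- The ℓ1 norm of a vector in ℝ^n. -/
noncomputable def nrm1 {n : ℕ} (x : Fin n → ℝ) : ℝ := ∑ i, |x i|

/-- The ℓ2 (Euclidean) norm of a vector in ℝ^n. -/
noncomputable def nrm2 {n : ℕ} (x : Fin n → ℝ) : ℝ := Real.sqrt (∑ i, (x i) ^ 2)

/-- The weighted ℓ1 norm associated with support-estimate sets `T 1, …, T N`
(with weights `w 1, …, w N`), where weight `1` is used off `⋃ i, T i`. -/
noncomputable def wl1 {n : ℕ} (N : ℕ) (T : ℕ → Finset (Fin n)) (w : ℕ → ℝ)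
    (x : Fin n → ℝ) : ℝ :=
  ∑ i ∈ Finset.Icc 1 N, w i * nrm1 (restr x (T i)) +
    nrm1 (restr x ((Finset.Icc 1 N).biUnion T)ᶜ)

/-- `A` satisfies the restricted isometry bound with constant `δ` at sparsity level `k`. -/
def RIPBound {m n : ℕ} (A : Matrix (Fin m) (Fin n) ℝ) (δ : ℝ) (k : ℕ) : Prop :=
  ∀ v : Fin n → ℝ, (Finset.univ.filter fun i => v i ≠ 0).card ≤ k →
    (1 - δ) * (nrm2 v) ^ 2 ≤ (nrm2 (A.mulVec v)) ^ 2 ∧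
      (nrm2 (A.mulVec v)) ^ 2 ≤ (1 + δ) * (nrm2 v) ^ 2

/-- The constant `K_N` appearing in the multi-weight recovery guarantee. -/
noncomputable def KN (N : ℕ) (w ρ α : ℕ → ℝ) : ℝ :=
  w N + (1 - w 1) * Real.sqrt (1 + ∑ i ∈ Finset.Icc 1 N, (ρ i - 2 * α i * ρ i)) +
    ∑ j ∈ Finset.Icc 2 N, (w (j - 1) - w j) *
      Real.sqrt (1 + ∑ i ∈ Finset.Icc j N, (ρ i - 2 * α i * ρ i))

/-- The quantity `D` appearing in the multi-weight error bounds. -/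
noncomputable def DD {n : ℕ} (N : ℕ) (T : ℕ → Finset (Fin n)) (T₀ : Finset (Fin n))
    (w : ℕ → ℝ) (x : Fin n → ℝ) : ℝ :=
  (∑ i ∈ Finset.Icc 1 N, w i) * nrm1 (restr x T₀ᶜ) +
    (1 - ∑ i ∈ Finset.Icc 1 N, w i) *
      nrm1 (restr x (((Finset.Icc 1 N).biUnion T)ᶜ ∩ T₀ᶜ)) -
    ∑ i ∈ Finset.Icc 1 N, (∑ j ∈ (Finset.Icc 1 N).erase i, w j) *
      nrm1 (restr x (T i ∩ T₀ᶜ))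

/-- The set `S_j = (T₀ ∪ ⋃_{i=j}^N T̃ᵢ) \ ⋃_{i=j}^N (T̃ᵢ ∩ T₀)`. -/
def SS {n : ℕ} (N : ℕ) (T : ℕ → Finset (Fin n)) (T₀ : Finset (Fin n)) (j : ℕ) :
    Finset (Fin n) :=
  (T₀ ∪ (Finset.Icc j N).biUnion T) \ (Finset.Icc j N).biUnion (fun i => T i ∩ T₀)

/-!
Each tail block is dominated entrywise by the preceding one: every `|h u|` with `u ∈ T_j` is at
most the average of `|h|` over the `k` entries of `T_{j-1}`, so `‖h_{T_j}‖₂ ≤ √k · ‖h_{T_{j-1}}‖₁ / k`.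
Summing over `j ≥ 2` uses each of `T_1, …, T_{M-1}` once, and all blocks together partition `T₀ᶜ`.
-/

lemma sqrt_sum_sq_le_of_abs_le {ι : Type*} (f : ι → ℝ) {A B : Finset ι} (hcard : #B ≤ #A)
    (hle : ∀ u ∈ B, ∀ v ∈ A, |f u| ≤ |f v|) :
    √(∑ u ∈ B, f u ^ 2) ≤ (√(#A : ℝ))⁻¹ * ∑ v ∈ A, |f v| := by
  rcases A.eq_empty_or_nonempty with rfl | hA
  · simp [card_eq_zero.mp (Nat.le_zero.mp hcard)]
  set S := ∑ v ∈ A, |f v|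
  have hApos : (0 : ℝ) < #A := by exact_mod_cast hA.card_pos
  have habs_le_avg : ∀ u ∈ B, |f u| ≤ S / #A := fun u hu => by
    rw [le_div_iff₀ hApos, mul_comm, ← nsmul_eq_mul, ← sum_const]
    exact sum_le_sum fun v hv => hle u hu v hv
  have hsq : ∑ u ∈ B, f u ^ 2 ≤ S ^ 2 / #A :=
    calc ∑ u ∈ B, f u ^ 2 ≤ ∑ _u ∈ B, (S / #A) ^ 2 :=
          sum_le_sum fun u hu => sq_le_sq.mpr ((habs_le_avg u hu).trans (le_abs_self _))
      _ = #B * (S / #A) ^ 2 := by rw [sum_const, nsmul_eq_mul]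
      _ ≤ #A * (S / #A) ^ 2 := by gcongr
      _ = S ^ 2 / #A := by field_simp
  calc √(∑ u ∈ B, f u ^ 2) ≤ √(S ^ 2 / #A) := Real.sqrt_le_sqrt hsq
    _ = (√(#A : ℝ))⁻¹ * S := by
      rw [Real.sqrt_div' _ hApos.le, Real.sqrt_sq (sum_nonneg fun _ _ => abs_nonneg _),
        div_eq_inv_mul]

lemma sum_Icc_two_sub_one_le {M : ℕ} (g : ℕ → ℝ) (hM : 0 ≤ g M) :
    ∑ j ∈ Icc 2 M, g (j - 1) ≤ ∑ j ∈ Icc 1 M, g j := by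
  cases M with
  | zero => simp
  | succ m =>
    rw [sum_Icc_succ_top (by omega : 1 ≤ m + 1), ← map_add_right_Icc 1 m 1, sum_map]
    simpa using hM

section restr

variable {n : ℕ} (h : Fin n → ℝ)

lemma nrm1_restr (S : Finset (Fin n)) : nrm1 (restr h S) = ∑ i ∈ S, |h i| := by
  simp [nrm1, restr, apply_ite abs, sum_ite_mem]

lemma nrm2_restr (S : Finset (Fin n)) : nrm2 (restr h S) = √(∑ i ∈ S, h i ^ 2) := by
  simp [nrm2, restr, apply_ite (· ^ 2), sum_ite_mem]

lemma nrm1_restr_nonneg (S : Finset (Fin n)) : 0 ≤ nrm1 (restr h S) := by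
  rw [nrm1_restr]
  exact sum_nonneg fun _ _ => abs_nonneg _

lemma nrm1_restr_biUnion {ι : Type*} {s : Finset ι} {T : ι → Finset (Fin n)}
    (hT : (s : Set ι).PairwiseDisjoint T) :
    nrm1 (restr h (s.biUnion T)) = ∑ i ∈ s, nrm1 (restr h (T i)) := by
  simp only [nrm1_restr, sum_biUnion hT]

lemma nrm2_restr_le_of_abs_le {A B : Finset (Fin n)} (hcard : #B ≤ #A)
    (hle : ∀ u ∈ B, ∀ v ∈ A, |h u| ≤ |h v|) :
    nrm2 (restr h B) ≤ (√(#A : ℝ))⁻¹ * nrm1 (restr h A) := by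
  rw [nrm2_restr, nrm1_restr]
  exact sqrt_sum_sq_le_of_abs_le h hcard hle

end restr

theorem tail_blocks_bound_general
    {n : ℕ} (h : Fin n → ℝ) (T₀ : Finset (Fin n))
    (k M : ℕ) (Tb : ℕ → Finset (Fin n))
    (hTbdisj : ∀ i ∈ Finset.Icc 1 M, ∀ j ∈ Finset.Icc 1 M, i ≠ j → Disjoint (Tb i) (Tb j))
    (hTbcover : (Finset.Icc 1 M).biUnion Tb = T₀ᶜ)
    (hTbcard : ∀ j, 1 ≤ j → j < M → (Tb j).card = k)
    (hTblast : (Tb M).card ≤ k)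
    (hTbsorted : ∀ j, 2 ≤ j → j ≤ M → ∀ u ∈ Tb j, ∀ v ∈ Tb (j - 1), |h u| ≤ |h v|) :
    ∑ j ∈ Finset.Icc 2 M, nrm2 (restr h (Tb j)) ≤
      (Real.sqrt (k : ℝ))⁻¹ * nrm1 (restr h T₀ᶜ) := by
  have hblock : ∀ j ∈ Icc 2 M,
      nrm2 (restr h (Tb j)) ≤ (√(k : ℝ))⁻¹ * nrm1 (restr h (Tb (j - 1))) := by
    intro j hj
    obtain ⟨hj2, hjM⟩ := mem_Icc.mp hj
    have hprev : #(Tb (j - 1)) = k := hTbcard (j - 1) (by omega) (by omega)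
    have hcur : #(Tb j) ≤ k := by
      rcases hjM.lt_or_eq with hlt | rfl
      · exact (hTbcard j (by omega) hlt).le
      · exact hTblast
    simpa only [hprev] using
      nrm2_restr_le_of_abs_le h (hprev ▸ hcur) (hTbsorted j hj2 hjM)
  calc ∑ j ∈ Icc 2 M, nrm2 (restr h (Tb j))
      ≤ ∑ j ∈ Icc 2 M, (√(k : ℝ))⁻¹ * nrm1 (restr h (Tb (j - 1))) := sum_le_sum hblock
    _ = (√(k : ℝ))⁻¹ * ∑ j ∈ Icc 2 M, nrm1 (restr h (Tb (j - 1))) := (mul_sum ..).symm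
    _ ≤ (√(k : ℝ))⁻¹ * ∑ j ∈ Icc 1 M, nrm1 (restr h (Tb j)) := by
      gcongr
      exact sum_Icc_two_sub_one_le (fun j => nrm1 (restr h (Tb j))) (nrm1_restr_nonneg h _)
    _ = (√(k : ℝ))⁻¹ * nrm1 (restr h T₀ᶜ) := by
      rw [← hTbcover, nrm1_restr_biUnion h hTbdisj]

/-- summing the block-sorting bounds over the tail blocks. -/
theorem tail_blocks_bound
    {n : ℕ} (h : Fin n → ℝ) (T₀ : Finset (Fin n))
    (k M : ℕ) (hk : 0 < k) (Tb : ℕ → Finset (Fin n))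
    (hTbdisj : ∀ i ∈ Finset.Icc 1 M, ∀ j ∈ Finset.Icc 1 M, i ≠ j → Disjoint (Tb i) (Tb j))
    (hTbcover : (Finset.Icc 1 M).biUnion Tb = T₀ᶜ)
    (hTbcard : ∀ j, 1 ≤ j → j < M → (Tb j).card = k)
    (hTblast : (Tb M).card ≤ k)
    (hTbsorted : ∀ j, 2 ≤ j → j ≤ M → ∀ u ∈ Tb j, ∀ v ∈ Tb (j - 1), |h u| ≤ |h v|) :
    ∑ j ∈ Finset.Icc 2 M, nrm2 (restr h (Tb j)) ≤
      (Real.sqrt (k : ℝ))⁻¹ * nrm1 (restr h T₀ᶜ) :=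
  tail_blocks_bound_general h T₀ k M Tb hTbdisj hTbcover hTbcard hTblast hTbsorted
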